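/- For every μ ∈ ℝ and every subset Ω ⊆ Λ, decoupling the Laplacian across the boundary of Ω raises the sum of negative eigenvalues: Tr{[-Δ̃ - μ·Id]_-} ≥ Tr{[-Δ - μ·Id]_-}, where Δ̃ := P_Ω Δ P_Ω + P_Ω^⊥ Δ P_Ω^⊥. -/

import Mathlib

/-!
The variational principle `Tr[X]₋ = min {Re Tr (X γ) : 0 ≤ γ ≤ 1}` holds for hermitian `X`, the
minimum being attained at the spectral projection of `X` onto its negative eigenvalues. With
`P = P_Ω` and `X = -Δ - μ`, the decoupled operator is the pinching `P X P + (1 - P) X (1 - P)`.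
Pinching is self-dual for the trace pairing and preserves `0 ≤ γ ≤ 1`, so the pinched minimizer
for the decoupled operator is a trial state for `X` with the same energy.
-/

open Matrix
open scoped BigOperators Classical ComplexOrder

noncomputable section

/-- The discrete torus `Λ = (ℤ/Lℤ)^d`. -/
abbrev Lam (d L : ℕ) : Type := Fin d → ZMod L

/-- `x` and `y` are nearest neighbors on the torus (ℓ¹-distance 1). -/
def isNN {d L : ℕ} (x y : Lam d L) : Prop :=
  ∃ ν : Fin d, (x ν = y ν + 1 ∨ x ν + 1 = y ν) ∧ ∀ μ : Fin d, μ ≠ ν → x μ = y μ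

/-- The discrete Laplacian `Δ = T - 2d·Id` on the torus. -/
def lap (d L : ℕ) : Matrix (Lam d L) (Lam d L) ℂ :=
  (Matrix.of fun x y => if isNN x y then (1 : ℂ) else 0) - (2 * (d : ℂ)) • 1

/-- A one-particle density matrix: hermitian with `0 ≤ γ ≤ 1` as quadratic forms. -/
def IsDM {d L : ℕ} [NeZero L] (γ : Matrix (Lam d L) (Lam d L) ℂ) : Prop :=
  γ.PosSemidef ∧ (1 - γ).PosSemidef

/-- `Tr{[X]_-}`: the sum of the negative eigenvalues of a hermitian matrix `X`
(junk value `0` if `X` is not hermitian). -/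
def negTrace {n : Type} [Fintype n] [DecidableEq n] (X : Matrix n n ℂ) : ℝ :=
  if hX : X.IsHermitian then ∑ i, min (hX.eigenvalues i) 0 else 0

/-- The HFz energy functional. -/
def hfzE {d L : ℕ} [NeZero L] (μ U : ℝ) (γu γd : Matrix (Lam d L) (Lam d L) ℂ) : ℝ :=
  (((-(lap d L) - (μ : ℂ) • 1) * (γu + γd)).trace).re
    + U * ∑ x, (γu x x).re * (γd x x).re

/-- The set of HFz energy values over pairs of one-particle density matrices. -/
def hfzEnergies (d L : ℕ) [NeZero L] (μ U : ℝ) : Set ℝ :=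
  { E | ∃ γu γd : Matrix (Lam d L) (Lam d L) ℂ, IsDM γu ∧ IsDM γd ∧ hfzE μ U γu γd = E }

/-- The diagonal orthogonal projection `P_A` onto the coordinates in `A`. -/
def proj {d L : ℕ} (A : Set (Lam d L)) : Matrix (Lam d L) (Lam d L) ℂ :=
  Matrix.diagonal fun x => if x ∈ A then 1 else 0

/-- The boundary `∂Ω := {x ∈ Ω : x has a nearest neighbor outside Ω}`. -/
def bdry {d L : ℕ} (Ω : Set (Lam d L)) : Set (Lam d L) :=
  {x | x ∈ Ω ∧ ∃ y, y ∉ Ω ∧ isNN x y}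

lemma min_zero_le_mul {a t : ℝ} (ht₀ : 0 ≤ t) (ht₁ : t ≤ 1) : min a 0 ≤ a * t := by
  rcases le_total 0 a with ha | ha
  · exact (min_le_right a 0).trans (mul_nonneg ha ht₀)
  · exact (min_le_left a 0).trans (by nlinarith)

section VariationalPrinciple

variable {n : Type} [Fintype n] [DecidableEq n]

lemma Matrix.PosSemidef.re_diag_unitary_conj_mem_Icc {γ : Matrix n n ℂ} (hγ : γ.PosSemidef)
    (hγ' : (1 - γ).PosSemidef) (U : unitary (Matrix n n ℂ)) (i : n) :
    ((star (U : Matrix n n ℂ) * γ * U) i i).re ∈ Set.Icc 0 1 := by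
  have hconj : star (U : Matrix n n ℂ) * (1 - γ) * U = 1 - star (U : Matrix n n ℂ) * γ * U := by
    rw [Matrix.mul_sub, Matrix.sub_mul, Matrix.mul_one, Unitary.coe_star_mul_self]
  have h₀ := (hγ.conjTranspose_mul_mul_same (U : Matrix n n ℂ)).diag_nonneg (i := i)
  have h₁ := (hγ'.conjTranspose_mul_mul_same (U : Matrix n n ℂ)).diag_nonneg (i := i)
  rw [← star_eq_conjTranspose] at h₀ h₁
  rw [hconj] at h₁
  simp only [Matrix.sub_apply, Matrix.one_apply_eq] at h₁
  exact ⟨(Complex.nonneg_iff.mp h₀).1, by simpa using (Complex.nonneg_iff.mp h₁).1⟩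

namespace Matrix.IsHermitian

variable {X : Matrix n n ℂ}

lemma re_trace_mul_eq_sum_eigenvalues (hX : X.IsHermitian) (γ : Matrix n n ℂ) :
    (X * γ).trace.re = ∑ i, hX.eigenvalues i *
      ((star (hX.eigenvectorUnitary : Matrix n n ℂ) * γ * hX.eigenvectorUnitary) i i).re := by
  set U : Matrix n n ℂ := (hX.eigenvectorUnitary : Matrix n n ℂ)
  calc (X * γ).trace.re
      = (U * (diagonal (RCLike.ofReal ∘ hX.eigenvalues) * (star U * γ))).trace.re := by
        conv_lhs => rw [hX.spectral_theorem, Unitary.conjStarAlgAut_apply]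
        simp only [Matrix.mul_assoc, U]
    _ = (diagonal (RCLike.ofReal ∘ hX.eigenvalues) * (star U * γ * U)).trace.re := by
        rw [trace_mul_comm, Matrix.mul_assoc, Matrix.mul_assoc]
    _ = _ := by simp [trace, diagonal_mul, Complex.re_sum]

lemma negTrace_le_re_trace_mul (hX : X.IsHermitian) {γ : Matrix n n ℂ} (hγ : γ.PosSemidef)
    (hγ' : (1 - γ).PosSemidef) : negTrace X ≤ (X * γ).trace.re := by
  rw [negTrace, dif_pos hX, hX.re_trace_mul_eq_sum_eigenvalues]
  refine Finset.sum_le_sum fun i _ => ?_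
  obtain ⟨h₀, h₁⟩ := hγ.re_diag_unitary_conj_mem_Icc hγ' hX.eigenvectorUnitary i
  exact min_zero_le_mul h₀ h₁

lemma exists_re_trace_mul_eq_negTrace (hX : X.IsHermitian) :
    ∃ γ : Matrix n n ℂ, γ.PosSemidef ∧ (1 - γ).PosSemidef ∧ (X * γ).trace.re = negTrace X := by
  set U : Matrix n n ℂ := (hX.eigenvectorUnitary : Matrix n n ℂ)
  have hU : star U * U = 1 := Unitary.coe_star_mul_self _
  have hU' : U * star U = 1 := Unitary.coe_mul_star_self _
  set e : n → ℂ := fun i => if hX.eigenvalues i < 0 then 1 else 0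
  have he₀ : ∀ i, 0 ≤ e i := fun i => by simp only [e]; split_ifs <;> norm_num
  have he₁ : ∀ i, 0 ≤ 1 - e i := fun i => by simp only [e]; split_ifs <;> norm_num
  refine ⟨U * diagonal e * star U, ?_, ?_, ?_⟩
  · simpa [star_eq_conjTranspose] using
      (posSemidef_diagonal_iff.mpr he₀).mul_mul_conjTranspose_same U
  · have hsub : 1 - U * diagonal e * star U = U * (1 - diagonal e) * star U := by
      rw [Matrix.mul_sub, Matrix.sub_mul, Matrix.mul_one, hU']
    rw [hsub, ← diagonal_one, diagonal_sub]
    simpa [star_eq_conjTranspose] using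
      (posSemidef_diagonal_iff.mpr he₁).mul_mul_conjTranspose_same U
  · have hconj : star U * (U * diagonal e * star U) * U = diagonal e := by
      simp only [← Matrix.mul_assoc, hU, Matrix.one_mul]
      rw [Matrix.mul_assoc, hU, Matrix.mul_one]
    rw [hX.re_trace_mul_eq_sum_eigenvalues, hconj, negTrace, dif_pos hX]
    refine Finset.sum_congr rfl fun i _ => ?_
    by_cases h : hX.eigenvalues i < 0
    · simp [e, h, h.le]
    · simp [e, h, not_lt.mp h]

end Matrix.IsHermitian

end VariationalPrinciple

section Pinching

variable {n R : Type*} [Fintype n] [DecidableEq n] [CommRing R]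

namespace Matrix

def pinch (P : Matrix n n R) : Matrix n n R →ₗ[R] Matrix n n R where
  toFun X := P * X * P + (1 - P) * X * (1 - P)
  map_add' X Y := by simp only [Matrix.mul_add, Matrix.add_mul]; abel
  map_smul' c X := by simp only [Matrix.mul_smul, Matrix.smul_mul, smul_add, RingHom.id_apply]

lemma pinch_apply (P X : Matrix n n R) :
    pinch P X = P * X * P + (1 - P) * X * (1 - P) := rfl

lemma pinch_one {P : Matrix n n R} (hP : IsIdempotentElem P) : pinch P 1 = 1 := by
  rw [pinch_apply, Matrix.mul_one, Matrix.mul_one, hP.eq, hP.one_sub.eq, add_sub_cancel]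

lemma trace_mul_pinch (P X γ : Matrix n n R) :
    (X * pinch P γ).trace = (pinch P X * γ).trace := by
  simp only [pinch_apply, Matrix.mul_add, Matrix.add_mul, trace_add, ← Matrix.mul_assoc]
  rw [trace_mul_comm (X * P * γ), trace_mul_comm (X * (1 - P) * γ)]
  simp only [Matrix.mul_assoc]

variable [StarRing R]

lemma IsHermitian.pinch {P X : Matrix n n R} (hX : X.IsHermitian) (hP : P.IsHermitian) :
    (pinch P X).IsHermitian := by
  have h₁ := isHermitian_conjTranspose_mul_mul P hX
  have h₂ := isHermitian_conjTranspose_mul_mul (1 - P) hX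
  rw [hP.eq] at h₁
  rw [(isHermitian_one.sub hP).eq] at h₂
  exact h₁.add h₂

lemma PosSemidef.pinch [PartialOrder R] [StarOrderedRing R] {P γ : Matrix n n R}
    (hγ : γ.PosSemidef) (hP : P.IsHermitian) : (pinch P γ).PosSemidef := by
  have h₁ := hγ.conjTranspose_mul_mul_same P
  have h₂ := hγ.conjTranspose_mul_mul_same (1 - P)
  rw [hP.eq] at h₁
  rw [(isHermitian_one.sub hP).eq] at h₂
  exact h₁.add h₂

end Matrix

end Pinching

theorem Matrix.negTrace_le_negTrace_pinch {n : Type} [Fintype n] [DecidableEq n]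
    {P X : Matrix n n ℂ} (hX : X.IsHermitian) (hP : P.IsHermitian) (hPP : IsIdempotentElem P) :
    negTrace X ≤ negTrace (pinch P X) := by
  obtain ⟨γ, hγ, hγ', hγX⟩ := (hX.pinch hP).exists_re_trace_mul_eq_negTrace
  have hγ'' : (1 - pinch P γ).PosSemidef := by
    rw [← pinch_one hPP, ← map_sub]
    exact hγ'.pinch hP
  calc negTrace X ≤ (X * pinch P γ).trace.re := hX.negTrace_le_re_trace_mul (hγ.pinch hP) hγ''
    _ = (pinch P X * γ).trace.re := by rw [trace_mul_pinch]
    _ = negTrace (pinch P X) := hγX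

section Torus

variable {d L : ℕ}

lemma isNN_comm {x y : Lam d L} : isNN x y ↔ isNN y x := by
  simp only [isNN, eq_comm (a := x _), eq_comm (a := x _ + 1), or_comm]

lemma lap_isHermitian (d L : ℕ) : (lap d L).IsHermitian := by
  refine (IsHermitian.ext fun x y => ?_).sub (isHermitian_one.smul ?_)
  · simp [isNN_comm, apply_ite (star : ℂ → ℂ)]
  · simp [IsSelfAdjoint]

lemma proj_isHermitian (A : Set (Lam d L)) : (proj A).IsHermitian :=
  isHermitian_diagonal_of_self_adjoint _ <| funext fun x => by
    by_cases hx : x ∈ A <;> simp [hx]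

lemma proj_compl (A : Set (Lam d L)) : proj Aᶜ = 1 - proj A := by
  rw [proj, proj, ← diagonal_one, diagonal_sub]
  congr 1 with x
  by_cases hx : x ∈ A <;> simp [hx]

variable [NeZero L]

lemma isIdempotentElem_proj (A : Set (Lam d L)) : IsIdempotentElem (proj A) := by
  rw [IsIdempotentElem, proj, diagonal_mul_diagonal]
  congr 1 with x
  by_cases hx : x ∈ A <;> simp [hx]

end Torus

theorem decoupling_raises_negative_eigenvalue_sum_general (d L : ℕ) [NeZero L]
    (μ : ℝ) (Ω : Set (Lam d L)) :
    negTrace (-(lap d L) - (μ : ℂ) • 1) ≤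
      negTrace (-(proj Ω * lap d L * proj Ω + proj Ωᶜ * lap d L * proj Ωᶜ)
        - (μ : ℂ) • 1) := by
  have hX : (-(lap d L) - (μ : ℂ) • 1).IsHermitian :=
    (lap_isHermitian d L).neg.sub (isHermitian_one.smul (Complex.conj_ofReal μ))
  have hdecouple : -(proj Ω * lap d L * proj Ω + proj Ωᶜ * lap d L * proj Ωᶜ) - (μ : ℂ) • 1
      = pinch (proj Ω) (-(lap d L) - (μ : ℂ) • 1) := by
    rw [map_sub, map_neg, map_smul, pinch_one (isIdempotentElem_proj Ω), pinch_apply, proj_compl]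
  rw [hdecouple]
  exact negTrace_le_negTrace_pinch hX (proj_isHermitian Ω) (isIdempotentElem_proj Ω)

/-- Eq. (3.55), nonnegativity of the decoupling cost: for every `μ`
and every `Ω ⊆ Λ`, `Tr{[-Δ̃-μ]_-} ≥ Tr{[-Δ-μ]_-}` with `Δ̃ = P_ΩΔP_Ω + P_Ω^⊥ΔP_Ω^⊥`. -/
theorem decoupling_raises_negative_eigenvalue_sum (d L : ℕ) (hd : 1 ≤ d) [NeZero L]
    (hLeven : Even L) (hL2 : 2 ≤ L) (μ : ℝ) (Ω : Set (Lam d L)) :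
    negTrace (-(lap d L) - (μ : ℂ) • 1) ≤
      negTrace (-(proj Ω * lap d L * proj Ω + proj Ωᶜ * lap d L * proj Ωᶜ)
        - (μ : ℂ) • 1) :=
  decoupling_raises_negative_eigenvalue_sum_general d L μ Ω
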